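/- arXiv:1504.01097 — 3 statements merged into one kernel-verified Lean document; each statement's English description precedes it below -/
import Mathlib

section
/- If X given λ is Poisson(λ) and λ has the transmuted exponential density f(λ) = (1-α)θe^{-θλ} + 2αθe^{-2θλ} on λ ≥ 0, with |α| ≤ 1 and θ > 0, then the marginal pmf of X is P(X = x) = θ((1-α)/(1+θ)^{x+1} + 2α/(1+2θ)^{x+1}) for x = 0, 1, 2, …. -/
open MeasureTheory Real Set
open scoped Nat

/-!
Since `e^{-λ} · e^{-βλ} = e^{-(1+β)λ}`, mixing the Poisson weight `e^{-λ} λ^x / x!` against an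
exponential `e^{-βλ}` is a Gamma integral: `∫₀^∞ λ^x e^{-(1+β)λ} dλ = x! / (1+β)^{x+1}`, so the
mixture equals `1 / (1+β)^{x+1}`. The transmuted exponential density is a linear combination of
two such exponentials (`β = θ` and `β = 2θ`), and the pmf follows by linearity.
-/

lemma integrableOn_pow_mul_exp_neg_mul_Ioi (n : ℕ) {r : ℝ} (hr : 0 < r) :
    IntegrableOn (fun t : ℝ => t ^ n * exp (-(r * t))) (Ioi 0) := by
  refine (integrableOn_rpow_mul_exp_neg_mul_rpow (s := n)
    (neg_one_lt_zero.trans_le n.cast_nonneg) one_pos hr).congr_fun (fun t _ => ?_) measurableSet_Ioi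
  simp only [rpow_natCast, rpow_one, neg_mul]

lemma integral_pow_mul_exp_neg_mul_Ioi (n : ℕ) {r : ℝ} (hr : 0 < r) :
    ∫ t in Ioi 0, t ^ n * exp (-(r * t)) = n ! / r ^ (n + 1) := by
  have h := integral_rpow_mul_exp_neg_mul_Ioi (a := n + 1) (by positivity) hr
  rw [add_sub_cancel_right, ← Nat.cast_add_one, rpow_natCast, Nat.cast_add_one,
    Gamma_nat_eq_factorial] at h
  simp only [rpow_natCast] at h
  rw [h, one_div, inv_pow, inv_mul_eq_div]

lemma poisson_mul_exp_neg_mul_eq (n : ℕ) (β l : ℝ) :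
    exp (-l) * l ^ n / n ! * exp (-β * l) = (n ! : ℝ)⁻¹ * (l ^ n * exp (-((1 + β) * l))) := by
  rw [show -((1 + β) * l) = -l + -β * l by ring, exp_add]
  ring

lemma integrableOn_poisson_mul_exp_neg_mul_Ioi (n : ℕ) {β : ℝ} (hβ : 0 < 1 + β) :
    IntegrableOn (fun l : ℝ => exp (-l) * l ^ n / n ! * exp (-β * l)) (Ioi 0) := by
  simp_rw [poisson_mul_exp_neg_mul_eq]
  exact (integrableOn_pow_mul_exp_neg_mul_Ioi n hβ).const_mul _

lemma integral_poisson_mul_exp_neg_mul_Ioi (n : ℕ) {β : ℝ} (hβ : 0 < 1 + β) :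
    ∫ l in Ioi 0, exp (-l) * l ^ n / n ! * exp (-β * l) = 1 / (1 + β) ^ (n + 1) := by
  simp_rw [poisson_mul_exp_neg_mul_eq, integral_const_mul,
    integral_pow_mul_exp_neg_mul_Ioi n hβ]
  field_simp

theorem pte_pmf_from_mixture_general (α θ : ℝ) (hθ : 0 < θ) (x : ℕ) :
    ∫ l in Set.Ioi (0 : ℝ),
      (Real.exp (-l) * l ^ x / (Nat.factorial x : ℝ)) *
        ((1 - α) * θ * Real.exp (-θ * l) + 2 * α * θ * Real.exp (-2 * θ * l))
    = θ * ((1 - α) / (1 + θ) ^ (x + 1) + 2 * α / (1 + 2 * θ) ^ (x + 1)) := by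
  have h₁ : 0 < 1 + θ := by linarith
  have h₂ : 0 < 1 + 2 * θ := by linarith
  have hsplit : ∀ l : ℝ,
      exp (-l) * l ^ x / x ! * ((1 - α) * θ * exp (-θ * l) + 2 * α * θ * exp (-2 * θ * l)) =
        (1 - α) * θ * (exp (-l) * l ^ x / x ! * exp (-θ * l)) +
          2 * α * θ * (exp (-l) * l ^ x / x ! * exp (-(2 * θ) * l)) := by
    intro l
    rw [neg_mul_eq_neg_mul 2 θ]
    ring
  simp_rw [hsplit]
  rw [integral_add ((integrableOn_poisson_mul_exp_neg_mul_Ioi x h₁).const_mul _)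
      ((integrableOn_poisson_mul_exp_neg_mul_Ioi x h₂).const_mul _),
    integral_const_mul, integral_const_mul, integral_poisson_mul_exp_neg_mul_Ioi x h₁,
    integral_poisson_mul_exp_neg_mul_Ioi x h₂]
  ring

/-- Mixing a Poisson(λ) pmf with the transmuted exponential density
yields the Poisson–Transmuted-Exponential pmf. -/
theorem pte_pmf_from_mixture (α θ : ℝ) (hα : |α| ≤ 1) (hθ : 0 < θ) (x : ℕ) :
    ∫ l in Set.Ioi (0 : ℝ),
      (Real.exp (-l) * l ^ x / (Nat.factorial x : ℝ)) *
        ((1 - α) * θ * Real.exp (-θ * l) + 2 * α * θ * Real.exp (-2 * θ * l))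
    = θ * ((1 - α) / (1 + θ) ^ (x + 1) + 2 * α / (1 + 2 * θ) ^ (x + 1)) :=
  pte_pmf_from_mixture_general α θ hθ x
end

section
/- If N ~ PTE(α,θ) and Y₁, Y₂, … are i.i.d. Exponential(λ) independent of N, then the aggregate sum S = Σ_{i=1}^{N} Y_i has density f_S(y) = θ[(1-α)λe^{-θλy/(1+θ)}/(1+θ)² + 2αλe^{-2θλy/(1+2θ)}/(1+2θ)²] for y > 0, together with an atom at zero of mass f_S(0) = θ((1-α)/(1+θ) + 2α/(1+2θ)). -/
lemma exp_tsum_aux (c : ℝ) : (∑' x : ℕ, c ^ x / (Nat.factorial x : ℝ)) = Real.exp c := by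
  rw [Real.exp_eq_exp_ℝ, NormedSpace.exp_eq_tsum_div]

/-- Aggregate-claim density for PTE frequency and Exponential(λ) severities,
with the atom at zero. -/
theorem pte_compound_exponential (α θ lam : ℝ) (hα : |α| ≤ 1) (hθ : 0 < θ)
    (hlam : 0 < lam)
    (p : ℕ → ℝ)
    (hp : ∀ x : ℕ, p x = θ * ((1 - α) / (1 + θ) ^ (x + 1) + 2 * α / (1 + 2 * θ) ^ (x + 1))) :
    (∀ y : ℝ, 0 < y →
      (∑' x : ℕ, p (x + 1) * (lam ^ (x + 1) * y ^ x * Real.exp (-lam * y) /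
          (Nat.factorial x : ℝ)))
        = θ * ((1 - α) * lam * Real.exp (-(θ * lam * y) / (1 + θ)) / (1 + θ) ^ 2
            + 2 * α * lam * Real.exp (-(2 * θ * lam * y) / (1 + 2 * θ)) / (1 + 2 * θ) ^ 2)) ∧
    p 0 = θ * ((1 - α) / (1 + θ) + 2 * α / (1 + 2 * θ)) := by
  have h1 : (0:ℝ) < 1 + θ := by linarith
  have h2 : (0:ℝ) < 1 + 2 * θ := by linarith
  constructor
  · intro y hy
    set c1 : ℝ := θ * (1 - α) * lam * Real.exp (-lam * y) / (1 + θ) ^ 2 with hc1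
    set c2 : ℝ := θ * (2 * α) * lam * Real.exp (-lam * y) / (1 + 2 * θ) ^ 2 with hc2
    have hrw : ∀ x : ℕ, p (x + 1) * (lam ^ (x + 1) * y ^ x * Real.exp (-lam * y) /
          (Nat.factorial x : ℝ))
        = c1 * ((lam * y / (1 + θ)) ^ x / (Nat.factorial x : ℝ))
          + c2 * ((lam * y / (1 + 2 * θ)) ^ x / (Nat.factorial x : ℝ)) := by
      intro x
      rw [hp, hc1, hc2]
      have hf : ((Nat.factorial x : ℝ)) ≠ 0 := by positivity
      rw [div_pow, div_pow]
      field_simp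
      ring
    calc (∑' x : ℕ, p (x + 1) * (lam ^ (x + 1) * y ^ x * Real.exp (-lam * y) /
          (Nat.factorial x : ℝ)))
        = ∑' x : ℕ, (c1 * ((lam * y / (1 + θ)) ^ x / (Nat.factorial x : ℝ))
          + c2 * ((lam * y / (1 + 2 * θ)) ^ x / (Nat.factorial x : ℝ))) := by
          exact tsum_congr hrw
      _ = c1 * Real.exp (lam * y / (1 + θ)) + c2 * Real.exp (lam * y / (1 + 2 * θ)) := by
          rw [Summable.tsum_add ((Real.summable_pow_div_factorial _).mul_left _)
            ((Real.summable_pow_div_factorial _).mul_left _),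
            tsum_mul_left, tsum_mul_left, exp_tsum_aux, exp_tsum_aux]
      _ = _ := by
          rw [hc1, hc2]
          have e1 : Real.exp (-lam * y) * Real.exp (lam * y / (1 + θ))
              = Real.exp (-(θ * lam * y) / (1 + θ)) := by
            rw [← Real.exp_add]
            congr 1
            field_simp
            ring
          have e2 : Real.exp (-lam * y) * Real.exp (lam * y / (1 + 2 * θ))
              = Real.exp (-(2 * θ * lam * y) / (1 + 2 * θ)) := by
            rw [← Real.exp_add]
            congr 1
            field_simp
            ring
          rw [div_mul_eq_mul_div, div_mul_eq_mul_div, mul_assoc (θ * (1 - α) * lam),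
            mul_assoc (θ * (2 * α) * lam), e1, e2]
          ring
  · rw [hp]; norm_num
end

section
/- If N ~ PTE(α,θ) and Y₁, Y₂, … are i.i.d. Erlang(2,λ) independent of N, then S = Σ_{i=1}^{N} Y_i has density f_S(y) = λθe^{-λy}[(1-α)sinh(yλ/√(1+θ))/(1+θ)^{3/2} + 2α·sinh(yλ/√(1+2θ))/(1+2θ)^{3/2}] for y > 0, with an atom at zero of mass θ((1-α)/(1+θ) + 2α/(1+2θ)). -/
/-!
Since `p (x + 1)` is a mixture of two geometric sequences, each term of the series splits into
two parts of the shape `(λy)^(2k+1) / a^(k+2) / (2k+1)!` with `a = 1 + θ` and `a = 1 + 2θ`.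
Writing `a^(k+2) = (√a)^(2k+1) · a^(3/2)` turns each part into the odd Taylor series of `sinh`
at `λy / √a`, scaled by `a^(-3/2)`.
-/

open Real

lemma hasSum_pow_div_pow_div_factorial_sinh {a : ℝ} (ha : 0 < a) (u : ℝ) :
    HasSum (fun k : ℕ => u ^ (2 * k + 1) / a ^ (k + 2) / (2 * k + 1).factorial)
      (sinh (u / √a) / a ^ ((3 : ℝ) / 2)) := by
  have hrpow : a ^ ((3 : ℝ) / 2) = a * √a := by
    rw [show (3 : ℝ) / 2 = 1 + 1 / 2 by norm_num, rpow_add ha, rpow_one, ← sqrt_eq_rpow]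
  refine ((hasSum_sinh (u / √a)).div_const (a ^ ((3 : ℝ) / 2))).congr_fun fun k => ?_
  have hpow : √a ^ (2 * k + 1) = a ^ k * √a := by
    rw [pow_succ, pow_mul, sq_sqrt ha.le]
  rw [hrpow, div_pow, hpow]
  field_simp
  rw [sq_sqrt ha.le]
  ring

theorem pte_compound_erlang_general (α θ lam : ℝ) (hθ : 0 < θ)
    (p : ℕ → ℝ)
    (hp : ∀ x : ℕ, p x = θ * ((1 - α) / (1 + θ) ^ (x + 1) + 2 * α / (1 + 2 * θ) ^ (x + 1))) :
    (∀ y : ℝ, 0 < y →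
      (∑' x : ℕ, p (x + 1) * (lam ^ (2 * (x + 1)) * y ^ (2 * (x + 1) - 1) *
          Real.exp (-lam * y) / (Nat.factorial (2 * (x + 1) - 1) : ℝ)))
        = lam * θ * Real.exp (-lam * y) *
            ((1 - α) * Real.sinh (y * lam / Real.sqrt (1 + θ)) / (1 + θ) ^ ((3 : ℝ) / 2)
              + 2 * α * Real.sinh (y * lam / Real.sqrt (1 + 2 * θ)) /
                  (1 + 2 * θ) ^ ((3 : ℝ) / 2))) ∧
    p 0 = θ * ((1 - α) / (1 + θ) + 2 * α / (1 + 2 * θ)) := by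
  refine ⟨fun y _ => ?_, by rw [hp]; norm_num⟩
  set f : ℝ → ℕ → ℝ := fun a k =>
    (y * lam) ^ (2 * k + 1) / a ^ (k + 2) / (2 * k + 1).factorial
  have hterm : ∀ k : ℕ,
      p (k + 1) * (lam ^ (2 * (k + 1)) * y ^ (2 * (k + 1) - 1) *
          exp (-lam * y) / ((2 * (k + 1) - 1).factorial : ℝ))
        = lam * θ * exp (-lam * y) * ((1 - α) * f (1 + θ) k + 2 * α * f (1 + 2 * θ) k) := by
    intro k
    rw [show 2 * (k + 1) - 1 = 2 * k + 1 by omega, hp]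
    simp only [f]
    ring
  rw [tsum_congr hterm]
  have hA : HasSum (f (1 + θ)) _ := hasSum_pow_div_pow_div_factorial_sinh (by linarith) (y * lam)
  have hB : HasSum (f (1 + 2 * θ)) _ :=
    hasSum_pow_div_pow_div_factorial_sinh (by linarith) (y * lam)
  have hsum :=
    ((hA.mul_left (1 - α)).add (hB.mul_left (2 * α))).mul_left (lam * θ * exp (-lam * y))
  rw [hsum.tsum_eq]
  ring

/-- Aggregate-claim density for PTE frequency and Erlang(2,λ) severities,
with the atom at zero. -/
theorem pte_compound_erlang (α θ lam : ℝ) (hα : |α| ≤ 1) (hθ : 0 < θ)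
    (hlam : 0 < lam)
    (p : ℕ → ℝ)
    (hp : ∀ x : ℕ, p x = θ * ((1 - α) / (1 + θ) ^ (x + 1) + 2 * α / (1 + 2 * θ) ^ (x + 1))) :
    (∀ y : ℝ, 0 < y →
      (∑' x : ℕ, p (x + 1) * (lam ^ (2 * (x + 1)) * y ^ (2 * (x + 1) - 1) *
          Real.exp (-lam * y) / (Nat.factorial (2 * (x + 1) - 1) : ℝ)))
        = lam * θ * Real.exp (-lam * y) *
            ((1 - α) * Real.sinh (y * lam / Real.sqrt (1 + θ)) / (1 + θ) ^ ((3 : ℝ) / 2)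
              + 2 * α * Real.sinh (y * lam / Real.sqrt (1 + 2 * θ)) /
                  (1 + 2 * θ) ^ ((3 : ℝ) / 2))) ∧
    p 0 = θ * ((1 - α) / (1 + θ) + 2 * α / (1 + 2 * θ)) :=
  pte_compound_erlang_general α θ lam hθ p hp
end
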